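/- For every integer n ≥ 3, f_{2n+1}(n−1, n) = (8n+5)/(16n+8). (This is the case m = 2, α = −1 of the closed form for values two steps below the top diagonal.) -/

import Mathlib

/-- Auxiliary backward-induction for the truncated Chow–Robbins value.
The first argument is the remaining number of tosses `N - (h + t)`. -/
def crAux : ℕ → ℕ → ℕ → ℕ → ℚ
  | 0, N, h, _t => max (1/2) ((h : ℚ) / (N : ℚ))
  | k+1, N, h, t =>
      max ((crAux k N (h+1) t + crAux k N h (t+1)) / 2) ((h : ℚ) / ((h : ℚ) + (t : ℚ)))

/-- `cr N h t` is the truncated Chow–Robbins value `f_N(h,t)`: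
the optimal expected reward of the coin-tossing game truncated at `N` tosses,
starting with `h` heads and `t` tails. -/
def cr (N h t : ℕ) : ℚ := crAux (N - (h + t)) N h t

/-!
Two tosses remain at `(n - 1, n)` in the game of length `2n + 1`. Every position from which
the head count can no longer exceed half of `2n + 1` is worth exactly `1/2`; the only other
position two tosses ahead is `(n + 1, n)`, worth `(n + 1)/(2n + 1)`. Averaging back up twice,
continuing always beats stopping, and gives `(8n + 5)/(16n + 8)`.
-/

theorem cr_of_add_eq {N h t : ℕ} (hN : h + t = N) :
    cr N h t = max (1/2) ((h : ℚ) / N) := by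
  rw [cr, hN, Nat.sub_self, crAux]

theorem cr_of_add_lt {N h t : ℕ} (hN : h + t < N) :
    cr N h t = max ((cr N (h+1) t + cr N h (t+1)) / 2) ((h : ℚ) / (h + t)) := by
  obtain ⟨k, hk⟩ : ∃ k, N - (h + t) = k + 1 := ⟨N - (h + t) - 1, by omega⟩
  have hk₁ : N - (h + 1 + t) = k := by omega
  have hk₂ : N - (h + (t + 1)) = k := by omega
  rw [cr, cr, cr, hk, hk₁, hk₂, crAux]

/-- If even all remaining tosses coming up heads leaves at most half heads, the game is worth
`1/2`. -/
theorem cr_eq_half_of_two_mul_sub_le {N h t : ℕ} (hN : h + t ≤ N) (hhalf : 2 * (N - t) ≤ N) :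
    cr N h t = 1/2 := by
  obtain ⟨k, hk⟩ : ∃ k, h + t + k = N := ⟨N - (h + t), by omega⟩
  induction k generalizing h t with
  | zero =>
    rw [cr_of_add_eq (by omega)]
    refine max_eq_left ?_
    rcases Nat.eq_zero_or_pos N with rfl | hN0
    · simp
    · have : (2 * h : ℚ) ≤ N := by exact_mod_cast (show 2 * h ≤ N by omega)
      exact (div_le_iff₀ (by exact_mod_cast hN0)).2 (by linarith)
  | succ k ih =>
    rw [cr_of_add_lt (by omega), ih (by omega) (by omega) (by omega),
      ih (by omega) (by omega) (by omega)]
    have hht : (h : ℚ) < t := by exact_mod_cast (show h < t by omega)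
    have ht : (0 : ℚ) < h + t := by linarith [(Nat.cast_nonneg h : (0 : ℚ) ≤ h)]
    rw [show ((1 : ℚ) / 2 + 1 / 2) / 2 = 1 / 2 by norm_num]
    exact max_eq_left ((div_le_iff₀ ht).2 (by linarith))

theorem cr_m2_am1 (n : ℕ) (hn : 3 ≤ n) :
    cr (2 * n + 1) (n - 1) n = (8 * (n : ℚ) + 5) / (16 * (n : ℚ) + 8) := by
  obtain ⟨m, rfl⟩ : ∃ m, n = m + 1 := ⟨n - 1, by omega⟩
  rw [show m + 1 - 1 = m by omega, show 2 * (m + 1) + 1 = 2 * m + 3 by omega]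
  have hwin : (1 / 2 : ℚ) ≤ (m + 2) / (2 * m + 3) := (le_div_iff₀ (by positivity)).2 (by linarith)
  have top : cr (2 * m + 3) (m + 2) (m + 1) = (m + 2) / (2 * m + 3) := by
    rw [cr_of_add_eq (by omega)]
    push_cast
    exact max_eq_right hwin
  have tie : cr (2 * m + 3) (m + 1) (m + 1) = ((m + 2) / (2 * m + 3) + 1/2) / 2 := by
    rw [cr_of_add_lt (by omega), top, cr_eq_half_of_two_mul_sub_le (by omega) (by omega)]
    have hstop : ((m + 1 : ℕ) : ℚ) / ((m + 1 : ℕ) + (m + 1 : ℕ)) = 1 / 2 := by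
      push_cast; field_simp; ring
    rw [hstop]
    exact max_eq_left (by linarith)
  rw [cr_of_add_lt (by omega), tie, cr_eq_half_of_two_mul_sub_le (by omega) (by omega)]
  have hstop : (m : ℚ) / (m + (m + 1 : ℕ)) ≤ 1 / 2 := by
    rw [div_le_iff₀ (by positivity)]; push_cast; linarith
  rw [max_eq_left (by linarith)]
  push_cast
  field_simp
  ring
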